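/- Let M be a weight sequence with M 0 = 1 and (M.1), and (M p)^(1/p) → ∞. Then for every p ∈ ℕ, M p = sup_{ρ ≥ 1} ρ^p / e^{ω_M(ρ)}, where ω_M is the associated function. -/
import Mathlib


open Filter

/-- The associated function `ω_M(ρ) = sup_{q} log(ρ^q / M q)`. -/
noncomputable def assocFun (M : ℕ → ℝ) (ρ : ℝ) : ℝ :=
  ⨆ q : ℕ, Real.log (ρ ^ q / M q)

private lemma bddAbove_of_eventually_nonpos {f : ℕ → ℝ} (N : ℕ)
    (h : ∀ q, N ≤ q → f q ≤ 0) : BddAbove (Set.range f) := by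
  refine ⟨max 0 ((Finset.range (N + 1)).sup' ⟨0, by simp⟩ f), ?_⟩
  rintro _ ⟨q, rfl⟩
  rcases le_or_gt N q with hq | hq
  · exact le_max_of_le_left (h q hq)
  · exact le_max_of_le_right (Finset.le_sup' f (Finset.mem_range.mpr (by omega)))

/-- Reconstruction of a log-convex sequence from its associated function
(Komatsu's Proposition 3.2): if `M` is positive, `M 0 = 1`, `M` satisfies (M.1),
`M p ≥ 1` for all `p` and `(M p)^(1/p) → ∞`, then for every `p`,
`M p = sup_{ρ ≥ 1} ρ^p / e^{ω_M(ρ)}`. -/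
theorem eq_iSup_assocFun (M : ℕ → ℝ) (hpos : ∀ p, 0 < M p) (h0 : M 0 = 1)
    (hM1 : ∀ p, 1 ≤ p → (M p) ^ 2 ≤ M (p - 1) * M (p + 1))
    (hge1 : ∀ p, 1 ≤ M p)
    (hlim : Tendsto (fun p : ℕ => (M p) ^ ((p : ℝ)⁻¹)) atTop atTop) :
    ∀ p : ℕ, M p = ⨆ ρ : Set.Ici (1 : ℝ), (ρ : ℝ) ^ p / Real.exp (assocFun M ρ) := by
  -- the quotient sequence
  set m : ℕ → ℝ := fun q => M (q + 1) / M q with hm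
  have hmono : Monotone m := by
    apply monotone_nat_of_le_succ
    intro q
    have h := hM1 (q + 1) (by omega)
    simp only [Nat.add_sub_cancel] at h
    simp only [hm]
    rw [div_le_div_iff₀ (hpos q) (hpos (q + 1))]
    nlinarith [hpos q, hpos (q + 1), hpos (q + 2)]
  have hm1 : ∀ q, 1 ≤ m q := by
    intro q
    have h0' : m 0 = M 1 := by simp [hm, h0]
    calc (1 : ℝ) ≤ M 1 := hge1 1
      _ = m 0 := h0'.symm
      _ ≤ m q := hmono (Nat.zero_le q)
  have hmpos : ∀ q, 0 < m q := fun q => lt_of_lt_of_le one_pos (hm1 q)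
  -- boundedness of the log family for each ρ ≥ 1
  have hbdd : ∀ ρ : ℝ, 1 ≤ ρ →
      BddAbove (Set.range fun q : ℕ => Real.log (ρ ^ q / M q)) := by
    intro ρ hρ
    have hρ0 : (0 : ℝ) < ρ := lt_of_lt_of_le one_pos hρ
    obtain ⟨N, hN⟩ := (hlim.eventually_ge_atTop ρ).exists_forall_of_atTop
    refine bddAbove_of_eventually_nonpos (max N 1) ?_
    intro q hq
    have hq1 : 1 ≤ q := le_trans (le_max_right N 1) hq
    have hq' : ρ ≤ M q ^ ((q : ℝ)⁻¹) := hN q (le_trans (le_max_left N 1) hq)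
    have hMq : ρ ^ q ≤ M q := by
      have hqpos : (0 : ℝ) < (q : ℝ) := by exact_mod_cast hq1
      have := Real.rpow_le_rpow (le_of_lt hρ0) hq' (le_of_lt hqpos)
      rw [← Real.rpow_mul (le_of_lt (hpos q)),
        inv_mul_cancel₀ (ne_of_gt hqpos), Real.rpow_one] at this
      rw [← Real.rpow_natCast ρ q]
      exact this
    have : ρ ^ q / M q ≤ 1 := (div_le_one (hpos q)).mpr hMq
    calc Real.log (ρ ^ q / M q) ≤ Real.log 1 := by
          apply Real.log_le_log (div_pos (pow_pos hρ0 q) (hpos q)) this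
      _ = 0 := Real.log_one
  intro p
  have hmm : ∀ a, M a * m a = M (a + 1) := by
    intro a
    have ha := (hpos a).ne'
    simp only [hm]
    field_simp
  set ρ₀ : ℝ := m p with hρ₀
  have hρ₀1 : 1 ≤ ρ₀ := hm1 p
  have hρ₀pos : (0 : ℝ) < ρ₀ := hmpos p
  -- Lemma A: M p * ρ₀ ^ j ≤ M (p + j)
  have A : ∀ j, M p * ρ₀ ^ j ≤ M (p + j) := by
    intro j
    induction j with
    | zero => simp
    | succ j ih =>
      have h1 : ρ₀ ≤ m (p + j) := hmono (by omega)
      calc M p * ρ₀ ^ (j + 1) = (M p * ρ₀ ^ j) * ρ₀ := by ring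
        _ ≤ M (p + j) * m (p + j) := by
            apply mul_le_mul ih h1 (le_of_lt hρ₀pos) (le_of_lt (hpos _))
        _ = M (p + j + 1) := hmm (p + j)
  -- Lemma B: M p ≤ M (p - j) * ρ₀ ^ j for j ≤ p
  have B : ∀ j, j ≤ p → M p ≤ M (p - j) * ρ₀ ^ j := by
    intro j
    induction j with
    | zero => simp
    | succ j ih =>
      intro hjp
      have hij := ih (by omega)
      have hrw : p - j = (p - (j + 1)) + 1 := by omega
      have h1 : m (p - (j + 1)) ≤ ρ₀ := hmono (by omega)
      calc M p ≤ M (p - j) * ρ₀ ^ j := hij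
        _ = M (p - (j + 1)) * m (p - (j + 1)) * ρ₀ ^ j := by
            rw [hrw, ← hmm]
        _ ≤ M (p - (j + 1)) * ρ₀ * ρ₀ ^ j := by
            apply mul_le_mul_of_nonneg_right _ (by positivity)
            exact mul_le_mul_of_nonneg_left h1 (le_of_lt (hpos _))
        _ = M (p - (j + 1)) * ρ₀ ^ (j + 1) := by ring
  -- key inequality
  have key : ∀ q : ℕ, ρ₀ ^ q * M p ≤ ρ₀ ^ p * M q := by
    intro q
    rcases le_or_gt p q with hpq | hpq
    · have hA := A (q - p)
      rw [Nat.add_sub_cancel' hpq] at hA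
      have hq' : ρ₀ ^ q = ρ₀ ^ p * ρ₀ ^ (q - p) := by
        rw [← pow_add, Nat.add_sub_cancel' hpq]
      calc ρ₀ ^ q * M p = ρ₀ ^ p * (M p * ρ₀ ^ (q - p)) := by rw [hq']; ring
        _ ≤ ρ₀ ^ p * M q := by
            apply mul_le_mul_of_nonneg_left hA (by positivity)
    · have hB := B (p - q) (by omega)
      rw [Nat.sub_sub_self (le_of_lt hpq)] at hB
      calc ρ₀ ^ q * M p ≤ ρ₀ ^ q * (M q * ρ₀ ^ (p - q)) := by
            apply mul_le_mul_of_nonneg_left hB (by positivity)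
        _ = ρ₀ ^ p * M q := by
            rw [← mul_assoc, mul_comm (ρ₀ ^ q) (M q), mul_assoc, ← pow_add,
              Nat.add_sub_cancel' (le_of_lt hpq)]; ring
  have hterm : ∀ q : ℕ, Real.log (ρ₀ ^ q / M q) ≤ Real.log (ρ₀ ^ p / M p) := by
    intro q
    apply Real.log_le_log (div_pos (pow_pos hρ₀pos q) (hpos q))
    rw [div_le_div_iff₀ (hpos q) (hpos p)]
    exact key q
  have hω : assocFun M ρ₀ = Real.log (ρ₀ ^ p / M p) := by
    apply le_antisymm (ciSup_le hterm)
    exact le_ciSup ⟨Real.log (ρ₀ ^ p / M p), by rintro _ ⟨q, rfl⟩; exact hterm q⟩ p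
  have hval : ρ₀ ^ p / Real.exp (assocFun M ρ₀) = M p := by
    rw [hω, Real.exp_log (div_pos (pow_pos hρ₀pos p) (hpos p))]
    field_simp [(hpos p).ne', (pow_pos hρ₀pos p).ne']
  -- every value is ≤ M p
  have hle : ∀ ρ : Set.Ici (1 : ℝ), (ρ : ℝ) ^ p / Real.exp (assocFun M ρ) ≤ M p := by
    rintro ⟨ρ, hρ⟩
    simp only [Set.mem_Ici] at hρ
    have hρ0 : (0 : ℝ) < ρ := lt_of_lt_of_le one_pos hρ
    have h1 : Real.log (ρ ^ p / M p) ≤ assocFun M ρ := le_ciSup (hbdd ρ hρ) p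
    have h2 : ρ ^ p / M p ≤ Real.exp (assocFun M ρ) := by
      calc ρ ^ p / M p = Real.exp (Real.log (ρ ^ p / M p)) :=
            (Real.exp_log (div_pos (pow_pos hρ0 p) (hpos p))).symm
        _ ≤ Real.exp (assocFun M ρ) := Real.exp_le_exp.mpr h1
    calc (ρ : ℝ) ^ p / Real.exp (assocFun M ρ) ≤ ρ ^ p / (ρ ^ p / M p) := by
          apply div_le_div_of_nonneg_left (by positivity)
            (div_pos (pow_pos hρ0 p) (hpos p)) h2
      _ = M p := by field_simp [(hpos p).ne', (pow_pos hρ0 p).ne']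
  have hne : Nonempty (Set.Ici (1 : ℝ)) := ⟨⟨1, Set.self_mem_Ici⟩⟩
  apply le_antisymm
  · exact le_ciSup_of_le ⟨M p, by rintro _ ⟨ρ, rfl⟩; exact hle ρ⟩ ⟨ρ₀, hρ₀1⟩ (le_of_eq hval.symm)
  · exact ciSup_le hle
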